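/- arXiv:2601.11338 — 6 statements merged into one kernel-verified Lean document; each statement's English description precedes it below -/
import Mathlib

section
/- Let G be a finite simple graph with adjacency matrix A and degree matrix D = diag(A𝟙). For k ∈ ℕ let P_k ∈ ℝ^{n×n} be defined entrywise by (P_k)_{ij} = the number of nonbacktracking walks of length k from i to j in G. Then P_0 = I, P_1 = A, P_2 = A² − D, and for every k ≥ 3 the three-term recurrence P_k = A·P_{k−1} + (I − D)·P_{k−2} holds. -/
open Matrix

/-- The number of backtracking instances of a walk `w`, i.e. the number of indices
`ℓ` with `0 ≤ ℓ ≤ length − 2` such that the `ℓ`-th and `(ℓ+2)`-th vertices coincide. -/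
def btCount {n : ℕ} {G : SimpleGraph (Fin n)} {i j : Fin n} (w : G.Walk i j) : ℕ :=
  ((Finset.range (w.length - 1)).filter (fun ℓ => w.getVert ℓ = w.getVert (ℓ + 2))).card

/-- The number of nonbacktracking walks of length `k` from `i` to `j` in `G`. -/
def nbtWalkCount {n : ℕ} (G : SimpleGraph (Fin n)) [DecidableRel G.Adj]
    (k : ℕ) (i j : Fin n) : ℕ :=
  ((G.finsetWalkLength k i j).filter (fun w => btCount w = 0)).card

/-! A nonbacktracking walk of length `k + 2` from `i` is a step to a neighbour `m` followed by a
nonbacktracking walk of length `k + 1` from `m` whose second vertex is not `i`. Those from `m`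
whose second vertex is `i` are, after deleting the first step, the nonbacktracking walks of length
`k` from `i` whose second vertex is not `m`. Summed over the neighbours `m`, these count every
nonbacktracking walk of length `k ≥ 1` from `i` exactly `deg i - 1` times, so
`∑_{m ~ i} P_{k+1}(m, j) = P_{k+2}(i, j) + (deg i - 1) P_k(i, j)`, which is the recurrence. -/

open SimpleGraph Finset

section

variable {n : ℕ} {G : SimpleGraph (Fin n)} {i j m : Fin n}

lemma btCount_eq_zero_of_length_le_one {w : G.Walk i j} (h : w.length ≤ 1) : btCount w = 0 := by
  simp [btCount, Nat.sub_eq_zero_of_le h]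

lemma btCount_cons (h : G.Adj i m) (u : G.Walk m j) :
    btCount (u.cons h) = btCount u + if i = u.snd then 1 else 0 := by
  obtain hu | ⟨t, hu⟩ : u.length = 0 ∨ ∃ t, u.length = t + 1 := by
    cases u.length <;> simp
  · have hi : i ≠ u.snd := by
      rw [Walk.snd, u.getVert_of_length_le (by omega), ← u.eq_of_length_eq_zero hu]
      exact h.ne
    simp [btCount, hu, hi]
  · simp only [btCount, Walk.length_cons, card_filter, add_tsub_cancel_right, hu, sum_range_succ']
    simp only [Walk.getVert_cons_succ, Walk.getVert_zero,
      show ∀ ℓ, ℓ + 1 + 2 = ℓ + 2 + 1 from fun _ => rfl]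

lemma btCount_cons_eq_zero_iff (h : G.Adj i m) (u : G.Walk m j) :
    btCount (u.cons h) = 0 ↔ btCount u = 0 ∧ u.snd ≠ i := by
  rw [btCount_cons]
  split_ifs with hi <;> simp [hi, eq_comm]

lemma btCount_of_length_eq_two {w : G.Walk i j} (h : w.length = 2) :
    btCount w = if i = j then 1 else 0 := by
  have h2 : w.getVert 2 = j := h ▸ w.getVert_length
  by_cases hij : i = j <;> simp [btCount, h, h2, hij, filter_singleton]

variable [DecidableRel G.Adj]

variable (G) in
def nbtWalks (k : ℕ) (i j : Fin n) : Finset (G.Walk i j) :=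
  {w ∈ G.finsetWalkLength k i j | btCount w = 0}

lemma nbtWalkCount_eq_card (k : ℕ) (i j : Fin n) : nbtWalkCount G k i j = #(nbtWalks G k i j) :=
  rfl

lemma mem_nbtWalks {k : ℕ} {w : G.Walk i j} :
    w ∈ nbtWalks G k i j ↔ w.length = k ∧ btCount w = 0 := by
  simp [nbtWalks, mem_finsetWalkLength_iff]

lemma card_nbtWalks_snd_eq (h : G.Adj i m) (k : ℕ) :
    #{w ∈ nbtWalks G (k + 1) i j | w.snd = m} = #{u ∈ nbtWalks G k m j | u.snd ≠ i} := by
  symm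
  refine card_bij (fun u _ => u.cons h) (fun u hu => ?_) (fun _ _ _ _ => by simp) (fun w hw => ?_)
  · simp only [mem_filter, mem_nbtWalks] at hu ⊢
    simp [btCount_cons_eq_zero_iff, hu]
  · simp only [mem_filter, mem_nbtWalks] at hw
    obtain ⟨⟨hlen, hbt⟩, hsnd⟩ := hw
    cases w with
    | nil => simp at hlen
    | cons h' u =>
      rw [Walk.snd_cons] at hsnd
      subst hsnd
      rw [btCount_cons_eq_zero_iff] at hbt
      exact ⟨u, mem_filter.mpr ⟨mem_nbtWalks.mpr ⟨by simpa using hlen, hbt.1⟩, hbt.2⟩,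
        rfl⟩

lemma nbtWalkCount_eq_sum_snd {k : ℕ} (hk : k ≠ 0) (i j : Fin n) :
    nbtWalkCount G k i j = ∑ m ∈ G.neighborFinset i, #{w ∈ nbtWalks G k i j | w.snd = m} := by
  rw [nbtWalkCount_eq_card]
  refine card_eq_sum_card_fiberwise fun w hw => ?_
  have hw := (mem_nbtWalks.mp hw).1
  rw [mem_coe, mem_neighborFinset]
  exact Walk.adj_snd (by rw [← Walk.length_eq_zero_iff]; omega)

lemma sum_nbtWalkCount_neighborFinset {k : ℕ} (hk : k ≠ 0) (i j : Fin n) :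
    ∑ m ∈ G.neighborFinset i, nbtWalkCount G (k + 1) m j + nbtWalkCount G k i j =
      nbtWalkCount G (k + 2) i j + G.degree i * nbtWalkCount G k i j := by
  set S := ∑ m ∈ G.neighborFinset i, #{w ∈ nbtWalks G k i j | w.snd ≠ m}
  have hleft : ∑ m ∈ G.neighborFinset i, nbtWalkCount G (k + 1) m j =
      S + nbtWalkCount G (k + 2) i j := by
    rw [nbtWalkCount_eq_sum_snd (by omega), ← sum_add_distrib]
    refine sum_congr rfl fun m hm => ?_
    have h := (mem_neighborFinset _ _ _).mp hm
    rw [nbtWalkCount_eq_card, ← card_filter_add_card_filter_not (p := fun w => w.snd = i),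
      card_nbtWalks_snd_eq h.symm, card_nbtWalks_snd_eq h, add_comm]
  have hright : G.degree i * nbtWalkCount G k i j = nbtWalkCount G k i j + S := by
    have hsplit : ∀ m, nbtWalkCount G k i j =
        #{w ∈ nbtWalks G k i j | w.snd = m} + #{w ∈ nbtWalks G k i j | w.snd ≠ m} :=
      fun _ => (card_filter_add_card_filter_not _).symm
    rw [← card_neighborFinset_eq_degree, ← smul_eq_mul, ← sum_const,
      sum_congr rfl fun m _ => hsplit m, sum_add_distrib, ← nbtWalkCount_eq_sum_snd hk]
  omega

lemma nbtWalkCount_of_le_one {k : ℕ} (hk : k ≤ 1) (i j : Fin n) :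
    nbtWalkCount G k i j = #(G.finsetWalkLength k i j) :=
  congrArg card <| filter_true_of_mem fun _ hw =>
    btCount_eq_zero_of_length_le_one ((mem_finsetWalkLength_iff.mp hw).symm ▸ hk)

lemma nbtWalkCount_two (i j : Fin n) :
    nbtWalkCount G 2 i j = if i = j then 0 else #(G.finsetWalkLength 2 i j) := by
  split_ifs with hij
  · refine card_eq_zero.mpr <| filter_false_of_mem fun w hw => ?_
    simp [btCount_of_length_eq_two (mem_finsetWalkLength_iff.mp hw), hij]
  · refine congrArg card <| filter_true_of_mem fun w hw => ?_
    simp [btCount_of_length_eq_two (mem_finsetWalkLength_iff.mp hw), hij]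

def nbtMatrix (R : Type*) [NatCast R] (G : SimpleGraph (Fin n)) [DecidableRel G.Adj] (k : ℕ) :
    Matrix (Fin n) (Fin n) R :=
  of fun i j => nbtWalkCount G k i j

variable (R : Type*)

lemma nbtMatrix_of_le_one [Semiring R] {k : ℕ} (hk : k ≤ 1) :
    nbtMatrix R G k = G.adjMatrix R ^ k := by
  ext i j
  simp [nbtMatrix, nbtWalkCount_of_le_one hk, adjMatrix_pow_apply_eq_card_walk]

lemma nbtMatrix_two [Ring R] : nbtMatrix R G 2 = G.adjMatrix R ^ 2 - G.degMatrix R := by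
  ext i j
  by_cases hij : i = j
  · subst hij
    rw [Matrix.sub_apply, sq, adjMatrix_mul_self_apply_self]
    simp [nbtMatrix, nbtWalkCount_two, degMatrix]
  · simp [nbtMatrix, nbtWalkCount_two, degMatrix, hij, adjMatrix_pow_apply_eq_card_walk]

lemma nbtMatrix_add_two [Ring R] {k : ℕ} (hk : k ≠ 0) :
    nbtMatrix R G (k + 2) =
      G.adjMatrix R * nbtMatrix R G (k + 1) + (1 - G.degMatrix R) * nbtMatrix R G k := by
  ext i j
  have h := congrArg (Nat.cast : ℕ → R) (sum_nbtWalkCount_neighborFinset (G := G) hk i j)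
  push_cast at h
  rw [Matrix.add_apply, adjMatrix_mul_apply, sub_mul, one_mul, Matrix.sub_apply, degMatrix,
    diagonal_mul]
  simp only [nbtMatrix, of_apply]
  rw [← add_sub_assoc, h, add_sub_cancel_right]

end

/-- Let `A = G.adjMatrix ℝ` and `D = diag(A𝟙)` be the adjacency and degree
matrices of a finite simple graph, and let `(P k) i j` be the number of nonbacktracking
walks of length `k` from `i` to `j`. Then `P 0 = I`, `P 1 = A`, `P 2 = A² − D`, and for
every `k ≥ 3`, `P k = A·P (k−1) + (I − D)·P (k−2)`. -/
theorem nbt_walk_count_recurrence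
    {n : ℕ} (G : SimpleGraph (Fin n)) [DecidableRel G.Adj]
    (A D : Matrix (Fin n) (Fin n) ℝ)
    (hA : A = G.adjMatrix ℝ)
    (hD : D = Matrix.diagonal (A *ᵥ fun _ => (1 : ℝ)))
    (P : ℕ → Matrix (Fin n) (Fin n) ℝ)
    (hP : ∀ k i j, P k i j = (nbtWalkCount G k i j : ℝ)) :
    P 0 = 1 ∧ P 1 = A ∧ P 2 = A ^ 2 - D ∧
    ∀ k, 3 ≤ k → P k = A * P (k - 1) + ((1 : Matrix (Fin n) (Fin n) ℝ) - D) * P (k - 2) := by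
  obtain rfl : P = nbtMatrix ℝ G := funext fun k => Matrix.ext (hP k)
  obtain rfl : D = G.degMatrix ℝ := by
    ext i j
    simp [hD, hA, degMatrix, diagonal_apply]
  subst hA
  refine ⟨by simpa using nbtMatrix_of_le_one ℝ zero_le_one,
    by simpa using nbtMatrix_of_le_one ℝ le_rfl, nbtMatrix_two ℝ, fun k hk => ?_⟩
  obtain ⟨t, rfl⟩ := Nat.exists_eq_add_of_le' hk
  exact nbtMatrix_add_two ℝ t.succ_ne_zero
end

section
/- Let A ∈ ℝ^{n×n} be the adjacency matrix of a finite simple graph, D = diag(A𝟙), and μ ∈ [0,1]. Define matrices q_k by the recurrence q_0 = I, q_1 = A, q_2 = A² − μD, and q_{k+1} = A·q_k + μ(μI − D)·q_{k−1} for k ≥ 2. Then every q_k is entrywise nonnegative. -/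
open Matrix

/-- Weighted backtrack-downweighted walk counts by first edge:
`btF A μ k i l j` is the weight of walks of length `k+1` whose first step is `i → l`
and which end at `j`. -/
noncomputable def btF {n : ℕ} (A : Matrix (Fin n) (Fin n) ℝ) (μ : ℝ) :
    ℕ → Fin n → Fin n → Fin n → ℝ
  | 0 => fun i l j => A i l * (if l = j then 1 else 0)
  | (k+1) => fun i l j =>
      A i l * ((∑ m, A l m * btF A μ k l m j) - μ * btF A μ k l i j)

lemma btF_succ {n : ℕ} (A : Matrix (Fin n) (Fin n) ℝ) (μ : ℝ) (k : ℕ) (i l j : Fin n) :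
    btF A μ (k+1) i l j
      = A i l * ((∑ m, A l m * btF A μ k l m j) - μ * btF A μ k l i j) := rfl

lemma btF_absorb {n : ℕ} {A : Matrix (Fin n) (Fin n) ℝ} {μ : ℝ}
    (h01 : ∀ i j, A i j = 0 ∨ A i j = 1) :
    ∀ k i l j, A i l * btF A μ k i l j = btF A μ k i l j := by
  intro k i l j
  cases k with
  | zero => simp only [btF]; rcases h01 i l with h | h <;> simp [h]
  | succ k => simp only [btF]; rcases h01 i l with h | h <;> simp [h]

lemma btF_nonneg {n : ℕ} {A : Matrix (Fin n) (Fin n) ℝ} {μ : ℝ}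
    (h01 : ∀ i j, A i j = 0 ∨ A i j = 1)
    (hμ0 : 0 ≤ μ) (hμ1 : μ ≤ 1) :
    ∀ k i l j, 0 ≤ btF A μ k i l j := by
  have hA0 : ∀ i j, (0:ℝ) ≤ A i j := by
    intro i j; rcases h01 i j with h | h <;> simp [h]
  intro k
  induction k with
  | zero =>
    intro i l j; simp only [btF]
    apply mul_nonneg (hA0 i l)
    split <;> norm_num
  | succ k ih =>
    intro i l j; simp only [btF]
    apply mul_nonneg (hA0 i l)
    have h1 : μ * btF A μ k l i j ≤ btF A μ k l i j := by
      nlinarith [ih l i j]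
    have h2 : btF A μ k l i j ≤ ∑ m, A l m * btF A μ k l m j := by
      calc btF A μ k l i j = A l i * btF A μ k l i j := (btF_absorb h01 k l i j).symm
        _ ≤ ∑ m, A l m * btF A μ k l m j := by
            apply Finset.single_le_sum (f := fun m => A l m * btF A μ k l m j)
            · intro m _; exact mul_nonneg (hA0 l m) (ih l m j)
            · exact Finset.mem_univ i
    linarith

/-- Let `A = G.adjMatrix ℝ` be the adjacency matrix of a finite simple
graph, `D = diag(A𝟙)`, `μ ∈ [0,1]`, and let `q` satisfy `q 0 = I`, `q 1 = A`,
`q 2 = A² − μD`, and `q (k+1) = A·q k + μ(μI − D)·q (k−1)` for `k ≥ 2`. Then every `q k`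
is entrywise nonnegative. -/
theorem btdw_matrices_nonneg
    {n : ℕ} (G : SimpleGraph (Fin n)) [DecidableRel G.Adj]
    (A D : Matrix (Fin n) (Fin n) ℝ)
    (hA : A = G.adjMatrix ℝ)
    (hD : D = Matrix.diagonal (A *ᵥ fun _ => (1 : ℝ)))
    (μ : ℝ) (hμ : μ ∈ Set.Icc (0 : ℝ) 1)
    (q : ℕ → Matrix (Fin n) (Fin n) ℝ)
    (hq0 : q 0 = 1) (hq1 : q 1 = A) (hq2 : q 2 = A ^ 2 - μ • D)
    (hqrec : ∀ k, 2 ≤ k →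
      q (k + 1) = A * q k + (μ • (μ • (1 : Matrix (Fin n) (Fin n) ℝ) - D)) * q (k - 1)) :
    ∀ k i j, 0 ≤ q k i j := by
  obtain ⟨hμ0, hμ1⟩ := hμ
  have h01 : ∀ i j, A i j = 0 ∨ A i j = 1 := by
    intro i j; rw [hA]; simp [SimpleGraph.adjMatrix_apply]
    by_cases h : G.Adj i j <;> simp [h]
  have hsym : ∀ i j, A i j = A j i := by
    intro i j; rw [hA]; simp [SimpleGraph.adjMatrix_apply, G.adj_comm]
  have hA0 : ∀ i j, (0:ℝ) ≤ A i j := by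
    intro i j; rcases h01 i j with h | h <;> simp [h]
  have hAsq : ∀ i j, A i j * A i j = A i j := by
    intro i j; rcases h01 i j with h | h <;> simp [h]
  -- degree
  have hDii : ∀ i, D i i = ∑ l, A i l := by
    intro i; rw [hD]; simp [Matrix.diagonal, Matrix.mulVec, dotProduct]
  have hDij : ∀ i j, i ≠ j → D i j = 0 := by
    intro i j hij; rw [hD]; simp [Matrix.diagonal, hij]
  -- the key identity: q (k+1) i j = ∑ l, btF A μ k i l j
  have key : ∀ k, ∀ i j, q (k+1) i j = ∑ l, btF A μ k i l j := by
    intro k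
    induction k using Nat.twoStepInduction with
    | zero =>
      intro i j
      rw [hq1]
      simp [btF, mul_ite]
    | one =>
      intro i j
      rw [hq2]
      have : ∀ l, btF A μ 1 i l j = A i l * A l j - μ * (A i l * A l i * (if i = j then 1 else 0)) := by
        intro l
        simp only [btF]
        have : ∑ m, A l m * (A l m * (if m = j then 1 else 0)) = A l j := by
          rw [Finset.sum_eq_single j]
          · simp [hAsq]
          · intro m _ hm; simp [hm]
          · simp
        rw [this]; ring
      rw [Finset.sum_congr rfl (fun l _ => this l)]
      rw [Finset.sum_sub_distrib]
      simp only [Matrix.sub_apply, Matrix.smul_apply, smul_eq_mul, pow_two, Matrix.mul_apply]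
      congr 1
      rw [← Finset.mul_sum]
      congr 1
      by_cases hij : i = j
      · subst hij
        rw [hDii]
        simp only [if_pos rfl, mul_one]
        apply Finset.sum_congr rfl
        intro l _
        rw [← hsym i l, hAsq]
        simp
      · rw [hDij i j hij]
        simp [hij]
    | more k ih1 ih2 =>
      intro i j
      have h2k : 2 ≤ k + 2 := by omega
      have hrec := hqrec (k+2) h2k
      have hx : k + 2 - 1 = k + 1 := by omega
      rw [hx] at hrec
      rw [show k + 2 + 1 = (k + 2) + 1 from rfl, hrec]
      simp only [Matrix.add_apply, Matrix.mul_apply, Matrix.smul_apply, Matrix.sub_apply,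
        Matrix.one_apply, smul_eq_mul]
      -- RHS of recurrence at (i,j)
      have hAq : ∀ l, q (k+2) l j = ∑ m, btF A μ (k+1) l m j := fun l => ih2 l j
      have hq1' : q (k+1) i j = ∑ l, btF A μ k i l j := ih1 i j
      -- expand LHS
      have step : ∀ l, btF A μ (k+2) i l j
          = A i l * q (k+2) l j - μ * (A i l * btF A μ (k+1) l i j) := by
        intro l
        rw [btF_succ, hAq l]
        have : ∑ m, A l m * btF A μ (k+1) l m j = ∑ m, btF A μ (k+1) l m j :=
          Finset.sum_congr rfl (fun m _ => btF_absorb h01 (k+1) l m j)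
        rw [this]; ring
      have hL : ∑ l, btF A μ (k+2) i l j
          = (∑ l, A i l * q (k+2) l j) - μ * ∑ l, A i l * btF A μ (k+1) l i j := by
        rw [Finset.sum_congr rfl (fun l _ => step l), Finset.sum_sub_distrib, ← Finset.mul_sum]
      -- the backtrack sum
      have hB : ∑ l, A i l * btF A μ (k+1) l i j
          = (D i i) * q (k + 1) i j - μ * q (k + 1) i j := by
        have hstep2 : ∀ l, A i l * btF A μ (k+1) l i j
            = A i l * (∑ m, btF A μ k i m j) - μ * (A i l * btF A μ k i l j) := by
          intro l
          rw [btF_succ]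
          have habs : A i l * A l i = A i l := by rw [← hsym i l, hAsq]
          have hsum : ∑ m, A i m * btF A μ k i m j = ∑ m, btF A μ k i m j :=
            Finset.sum_congr rfl (fun m _ => btF_absorb h01 k i m j)
          calc A i l * (A l i * ((∑ m, A i m * btF A μ k i m j) - μ * btF A μ k i l j))
              = (A i l * A l i) * ((∑ m, A i m * btF A μ k i m j) - μ * btF A μ k i l j) := by
                ring
            _ = A i l * (∑ m, btF A μ k i m j) - μ * (A i l * btF A μ k i l j) := by
                rw [habs, hsum]; ring
        rw [Finset.sum_congr rfl (fun l _ => hstep2 l), Finset.sum_sub_distrib,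
          ← Finset.sum_mul, ← Finset.mul_sum,
          Finset.sum_congr rfl (fun l _ => btF_absorb h01 k i l j),
          hDii, hq1']
      rw [hL, hB]
      -- Now pure algebra with the diagonal D
      have hDsum : ∑ l, μ * (μ * (if i = l then 1 else 0) - D i l) * q (k+1) l j
          = μ * (μ * q (k+1) i j - D i i * q (k+1) i j) := by
        rw [Finset.sum_eq_single i]
        · simp; ring
        · intro l _ hl
          rw [hDij i l (fun h => hl h.symm)]
          simp [Ne.symm hl]
        · simp
      rw [hDsum]
      ring
  intro k i j
  cases k with
  | zero =>
    rw [hq0]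
    by_cases hij : i = j <;> simp [Matrix.one_apply, hij]
  | succ k =>
    rw [key k i j]
    apply Finset.sum_nonneg
    intro l _
    exact btF_nonneg h01 hμ0 hμ1 k i l j
end

section
/- Let A ∈ ℝ^{n×n} be the adjacency matrix of a finite simple graph, D = diag(A𝟙), and μ ∈ [0,1]. Define matrices q_k by q_0 = I, q_1 = A, q_2 = A² − μD, and q_{k+1} = A·q_k + μ(μI − D)·q_{k−1} for k ≥ 2. Then every q_k is a symmetric matrix: q_kᵀ = q_k for all k ∈ ℕ. -/
open Matrix

/-- Let `A = G.adjMatrix ℝ` be the adjacency matrix of a finite simple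
graph, `D = diag(A𝟙)`, `μ ∈ [0,1]`, and let `q` satisfy `q 0 = I`, `q 1 = A`,
`q 2 = A² − μD`, and `q (k+1) = A·q k + μ(μI − D)·q (k−1)` for `k ≥ 2`. Then every `q k`
is a symmetric matrix: `(q k)ᵀ = q k` for all `k`. -/
theorem btdw_matrices_symm
    {n : ℕ} (G : SimpleGraph (Fin n)) [DecidableRel G.Adj]
    (A D : Matrix (Fin n) (Fin n) ℝ)
    (hA : A = G.adjMatrix ℝ)
    (hD : D = Matrix.diagonal (A *ᵥ fun _ => (1 : ℝ)))
    (μ : ℝ) (hμ : μ ∈ Set.Icc (0 : ℝ) 1)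
    (q : ℕ → Matrix (Fin n) (Fin n) ℝ)
    (hq0 : q 0 = 1) (hq1 : q 1 = A) (hq2 : q 2 = A ^ 2 - μ • D)
    (hqrec : ∀ k, 2 ≤ k →
      q (k + 1) = A * q k + (μ • (μ • (1 : Matrix (Fin n) (Fin n) ℝ) - D)) * q (k - 1)) :
    ∀ k, (q k)ᵀ = q k := by
  set M := μ • (μ • (1 : Matrix (Fin n) (Fin n) ℝ) - D) with hM
  have hDsymm : Dᵀ = D := by rw [hD]; exact Matrix.diagonal_transpose _
  have hAsymm : Aᵀ = A := by rw [hA]; exact SimpleGraph.transpose_adjMatrix ..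
  have hMsymm : Mᵀ = M := by
    rw [hM, Matrix.transpose_smul, Matrix.transpose_sub, Matrix.transpose_smul,
      Matrix.transpose_one, hDsymm]
  have hDM : D * M = M * D := by
    rw [hM]
    simp [mul_sub, sub_mul, mul_smul_comm, smul_mul_assoc]
  have key : ∀ k, (q k)ᵀ = q k ∧
      (A * q (k + 1) - q (k + 1) * A = q k * M - M * q k) := by
    intro k
    induction k using Nat.strong_induction_on with
    | _ k ih =>
      match k with
      | 0 =>
        constructor
        · rw [hq0, Matrix.transpose_one]
        · rw [hq1, hq0]; noncomm_ring
      | 1 =>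
        constructor
        · rw [hq1, hAsymm]
        · rw [hq2, hq1, hM]
          simp only [mul_sub, sub_mul, mul_smul_comm, smul_mul_assoc, sq, mul_assoc,
            smul_sub, smul_smul, mul_one, one_mul]
          module
      | 2 =>
        have c2 := (ih 1 (by omega)).2
        have e3 : q 3 = A * q 2 + M * q 1 := by
          have := hqrec 2 (by omega); simpa using this
        have hAA : A * A = q 2 + μ • D := by rw [hq2, sq]; abel
        constructor
        · rw [hq2, Matrix.transpose_sub, Matrix.transpose_smul, hDsymm, sq,
            Matrix.transpose_mul, hAsymm]
        · calc A * q 3 - q 3 * A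
              = A * (A * q 2 - q 2 * A) + (A * (M * q 1) - (M * q 1) * A) := by
                rw [e3]; noncomm_ring
            _ = A * (q 1 * M - M * q 1) + (A * (M * q 1) - (M * q 1) * A) := by rw [c2]
            _ = (A * q 1) * M - M * (q 1 * A) := by noncomm_ring
            _ = (A * A) * M - M * (A * A) := by rw [hq1]
            _ = (q 2 + μ • D) * M - M * (q 2 + μ • D) := by rw [hAA]
            _ = q 2 * M - M * q 2 + μ • (D * M) - μ • (M * D) := by
                simp [add_mul, mul_add, smul_mul_assoc, mul_smul_comm]; abel
            _ = q 2 * M - M * q 2 := by rw [hDM]; abel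
      | (m + 3) =>
        have sa := (ih (m + 1) (by omega)).1
        have sb := (ih (m + 2) (by omega)).1
        have c2 : A * q (m + 2) - q (m + 2) * A = q (m + 1) * M - M * q (m + 1) := by
          simpa using (ih (m + 1) (by omega)).2
        have c3 : A * q (m + 3) - q (m + 3) * A = q (m + 2) * M - M * q (m + 2) := by
          simpa using (ih (m + 2) (by omega)).2
        have e3 : q (m + 3) = A * q (m + 2) + M * q (m + 1) := by
          have := hqrec (m + 2) (by omega); simpa using this
        have e4 : q (m + 4) = A * q (m + 3) + M * q (m + 2) := by
          have := hqrec (m + 3) (by omega); simpa using this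
        constructor
        · rw [e3, Matrix.transpose_add, Matrix.transpose_mul, Matrix.transpose_mul,
            hAsymm, hMsymm, sa, sb, eq_add_of_sub_eq c2]
          noncomm_ring
        · show A * q (m + 4) - q (m + 4) * A = q (m + 3) * M - M * q (m + 3)
          calc A * q (m + 4) - q (m + 4) * A
              = A * (A * q (m + 3) - q (m + 3) * A)
                  + (A * (M * q (m + 2)) - M * q (m + 2) * A) := by
                rw [e4]; noncomm_ring
            _ = A * (q (m + 2) * M - M * q (m + 2))
                  + (A * (M * q (m + 2)) - M * q (m + 2) * A) := by rw [c3]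
            _ = A * q (m + 2) * M - M * (q (m + 2) * A)
                  - M * ((A * q (m + 2) - q (m + 2) * A)
                      - (q (m + 1) * M - M * q (m + 1))) := by
                rw [c2]; noncomm_ring
            _ = (A * q (m + 2) + M * q (m + 1)) * M
                  - M * (A * q (m + 2) + M * q (m + 1)) := by noncomm_ring
            _ = q (m + 3) * M - M * q (m + 3) := by rw [e3]
  intro k
  exact (key k).1
end

section
/- Let A ∈ ℝ^{n×n} be the adjacency matrix of a finite simple graph, D = diag(A𝟙), μ ∈ [0,1], q_k the backtrack-downweighted walk count matrices (q_0 = I, q_1 = A, q_2 = A² − μD, q_{k+1} = A·q_k + μ(μI − D)·q_{k−1}), and Z = [[O, I],[μ(μI − D), A]] ∈ ℝ^{2n×2n}. Let (c_k)_{k≥0} be reals such that the series Σ_{k=0}^∞ c_{k+2} Z^k converges in ℝ^{2n×2n}. Then the series φ = Σ_{k=0}^∞ c_k q_k converges in ℝ^{n×n} and satisfies the two closed-form identities φ = [O I]·(Σ_{k=0}^∞ c_{k+2} Z^k)·[q_1; q_2] + c_1 A + c_0 I and φ = [I O]·(Σ_{k=0}^∞ c_{k+1} Z^k)·[q_1;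 q_2] + c_0 I. -/
/-! `Z` is the companion matrix of the recurrence: it maps the state `[q k; q (k+1)]` to
`[q (k+1); q (k+2)]`, so `Z ^ k * [q 1; q 2] = [q (k+1); q (k+2)]`. Multiplying a power series
in `Z` by `[O I]` on the left and `[q 1; q 2]` on the right is continuous and linear, so it turns
`Σ c (k+2) • Z ^ k` into `Σ c (k+2) • q (k+2)`, and `[I O]` does the same for
`Σ c (k+1) • Z ^ k = c 1 • 1 + (Σ c (k+2) • Z ^ k) * Z`. -/

open Matrix

theorem HasSum.smul_pow_shift {R α : Type*} [CommRing R] [Ring α] [Algebra R α]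
    [TopologicalSpace α] [IsTopologicalRing α] {c : ℕ → R} {Z F : α}
    (h : HasSum (fun k => c (k + 2) • Z ^ k) F) :
    HasSum (fun k => c (k + 1) • Z ^ k) (F * Z + c 1 • 1) := by
  have h' : HasSum (fun k => c (k + 1 + 1) • Z ^ (k + 1)) (F * Z) := by
    simpa only [smul_mul_assoc, ← pow_succ] using h.mul_right Z
  simpa using (hasSum_nat_add_iff (f := fun k => c (k + 1) • Z ^ k) 1).mp h'

theorem HasSum.smul_mul_pow_mul {l n o R : Type*} [Fintype n] [DecidableEq n] [CommRing R]
    [TopologicalSpace R] [IsTopologicalRing R] {Z : Matrix n n R} {U : Matrix l n R}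
    {V : Matrix n o R} {p : ℕ → Matrix l o R} (hp : ∀ k, U * (Z ^ k * V) = p k)
    {c : ℕ → R} {F : Matrix n n R} (h : HasSum (fun k => c k • Z ^ k) F) :
    HasSum (fun k => c k • p k) (U * F * V) := by
  have hcont : Continuous fun M : Matrix n n R => U * M * V := by fun_prop
  have := h.map ((addMonoidHomMulRight V).comp (addMonoidHomMulLeft U)) hcont
  simpa [Function.comp_def, ← hp, Matrix.mul_assoc] using this

namespace Matrix

variable {m o R : Type*} [Fintype m] [DecidableEq m]

theorem fromBlocks_companion_pow_mul_fromRows [Ring R] {A B : Matrix m m R}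
    {q : ℕ → Matrix m o R} (hq : ∀ k, q (k + 2) = A * q (k + 1) + B * q k) (k : ℕ) :
    (fromBlocks 0 1 B A : Matrix (m ⊕ m) (m ⊕ m) R) ^ k * fromRows (q 0) (q 1) =
      fromRows (q k) (q (k + 1)) := by
  induction k with
  | zero => simp
  | succ k ih =>
    rw [pow_succ', Matrix.mul_assoc, ih, fromBlocks_mul_fromRows, hq]
    simp [add_comm]

variable [CommRing R] [TopologicalSpace R] [IsTopologicalRing R] {A B : Matrix m m R}
  {q : ℕ → Matrix m o R} {c : ℕ → R} {F : Matrix (m ⊕ m) (m ⊕ m) R}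

theorem hasSum_smul_of_hasSum_smul_companion_pow
    (hq : ∀ k, q (k + 2) = A * q (k + 1) + B * q k)
    (hF : HasSum (fun k => c k • fromBlocks 0 1 B A ^ k) F) :
    HasSum (fun k => c k • q k)
      (fromCols (1 : Matrix m m R) (0 : Matrix m m R) * F * fromRows (q 0) (q 1)) :=
  hF.smul_mul_pow_mul fun k => by
    rw [fromBlocks_companion_pow_mul_fromRows hq, fromCols_mul_fromRows]; simp

theorem hasSum_smul_succ_of_hasSum_smul_companion_pow
    (hq : ∀ k, q (k + 2) = A * q (k + 1) + B * q k)
    (hF : HasSum (fun k => c k • fromBlocks 0 1 B A ^ k) F) :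
    HasSum (fun k => c k • q (k + 1))
      (fromCols (0 : Matrix m m R) (1 : Matrix m m R) * F * fromRows (q 0) (q 1)) :=
  hF.smul_mul_pow_mul fun k => by
    rw [fromBlocks_companion_pow_mul_fromRows hq, fromCols_mul_fromRows]; simp

end Matrix

theorem btdw_series_closed_form_general
    {n : ℕ}
    (A D : Matrix (Fin n) (Fin n) ℝ)
    (μ : ℝ)
    (q : ℕ → Matrix (Fin n) (Fin n) ℝ)
    (hq0 : q 0 = 1) (hq1 : q 1 = A)
    (hqrec : ∀ k, 2 ≤ k →
      q (k + 1) = A * q k + (μ • (μ • (1 : Matrix (Fin n) (Fin n) ℝ) - D)) * q (k - 1))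
    (Z : Matrix (Fin n ⊕ Fin n) (Fin n ⊕ Fin n) ℝ)
    (hZ : Z = Matrix.fromBlocks 0 1 (μ • (μ • (1 : Matrix (Fin n) (Fin n) ℝ) - D)) A)
    (c : ℕ → ℝ)
    (F2 : Matrix (Fin n ⊕ Fin n) (Fin n ⊕ Fin n) ℝ)
    (hF2 : HasSum (fun k => c (k + 2) • Z ^ k) F2) :
    Summable (fun k => c k • q k) ∧
    Summable (fun k => c (k + 1) • Z ^ k) ∧
    (∑' k, c k • q k) =
      Matrix.fromCols (0 : Matrix (Fin n) (Fin n) ℝ) (1 : Matrix (Fin n) (Fin n) ℝ) * F2 * Matrix.fromRows (q 1) (q 2)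
        + c 1 • A + c 0 • (1 : Matrix (Fin n) (Fin n) ℝ) ∧
    (∑' k, c k • q k) =
      Matrix.fromCols (1 : Matrix (Fin n) (Fin n) ℝ) (0 : Matrix (Fin n) (Fin n) ℝ) * (∑' k, c (k + 1) • Z ^ k) * Matrix.fromRows (q 1) (q 2)
        + c 0 • (1 : Matrix (Fin n) (Fin n) ℝ) := by
  subst hZ
  have hrec (k : ℕ) : q (k + 1 + 2) = A * q (k + 1 + 1) + μ • (μ • 1 - D) * q (k + 1) :=
    hqrec (k + 2) (by omega)
  have hF1 := hF2.smul_pow_shift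
  have hsum2 := (hasSum_nat_add_iff (f := fun k => c k • q k) 2).mp
    (hasSum_smul_succ_of_hasSum_smul_companion_pow (q := fun k => q (k + 1)) hrec hF2)
  have hsum1 := (hasSum_nat_add_iff (f := fun k => c k • q k) 1).mp
    (hasSum_smul_of_hasSum_smul_companion_pow (q := fun k => q (k + 1)) hrec hF1)
  refine ⟨hsum2.summable, hF1.summable, ?_, ?_⟩
  · rw [hsum2.tsum_eq]
    simp only [Finset.sum_range_succ, Finset.range_one, Finset.sum_singleton, zero_add, hq0, hq1]
    abel
  · rw [hsum1.tsum_eq, hF1.tsum_eq]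
    simp [hq0]

/-- Let `A = G.adjMatrix ℝ`, `D = diag(A𝟙)`, `μ ∈ [0,1]`, `q` the
backtrack-downweighted walk count matrices, and `Z = [[O, I],[μ(μI − D), A]]`. If the
series `Σ_k c (k+2) • Z^k` converges (with sum `F2`), then `Σ_k c k • q k` converges,
the shifted series `Σ_k c (k+1) • Z^k` converges, and
`Σ_k c k • q k = [O I]·F2·[q 1; q 2] + c 1 • A + c 0 • I`
`             = [I O]·(Σ_k c (k+1) • Z^k)·[q 1; q 2] + c 0 • I`. -/
theorem btdw_series_closed_form
    {n : ℕ} (G : SimpleGraph (Fin n)) [DecidableRel G.Adj]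
    (A D : Matrix (Fin n) (Fin n) ℝ)
    (hA : A = G.adjMatrix ℝ)
    (hD : D = Matrix.diagonal (A *ᵥ fun _ => (1 : ℝ)))
    (μ : ℝ) (hμ : μ ∈ Set.Icc (0 : ℝ) 1)
    (q : ℕ → Matrix (Fin n) (Fin n) ℝ)
    (hq0 : q 0 = 1) (hq1 : q 1 = A) (hq2 : q 2 = A ^ 2 - μ • D)
    (hqrec : ∀ k, 2 ≤ k →
      q (k + 1) = A * q k + (μ • (μ • (1 : Matrix (Fin n) (Fin n) ℝ) - D)) * q (k - 1))
    (Z : Matrix (Fin n ⊕ Fin n) (Fin n ⊕ Fin n) ℝ)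
    (hZ : Z = Matrix.fromBlocks 0 1 (μ • (μ • (1 : Matrix (Fin n) (Fin n) ℝ) - D)) A)
    (c : ℕ → ℝ)
    (F2 : Matrix (Fin n ⊕ Fin n) (Fin n ⊕ Fin n) ℝ)
    (hF2 : HasSum (fun k => c (k + 2) • Z ^ k) F2) :
    Summable (fun k => c k • q k) ∧
    Summable (fun k => c (k + 1) • Z ^ k) ∧
    (∑' k, c k • q k) =
      Matrix.fromCols (0 : Matrix (Fin n) (Fin n) ℝ) (1 : Matrix (Fin n) (Fin n) ℝ) * F2 * Matrix.fromRows (q 1) (q 2)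
        + c 1 • A + c 0 • (1 : Matrix (Fin n) (Fin n) ℝ) ∧
    (∑' k, c k • q k) =
      Matrix.fromCols (1 : Matrix (Fin n) (Fin n) ℝ) (0 : Matrix (Fin n) (Fin n) ℝ) * (∑' k, c (k + 1) • Z ^ k) * Matrix.fromRows (q 1) (q 2)
        + c 0 • (1 : Matrix (Fin n) (Fin n) ℝ) :=
  btdw_series_closed_form_general A D μ q hq0 hq1 hqrec Z hZ c F2 hF2
end

section
/- Let A ∈ ℝ^{n×n} be the adjacency matrix of a finite simple graph, D = diag(A𝟙), and for μ = 1 let Z = [[O, I],[I − D, A]] ∈ ℝ^{2n×2n}. Let p_k be the nonbacktracking walk count matrices (p_0 = I, p_1 = A, p_2 = A² − D, p_{k} = A·p_{k−1} + (I − D)·p_{k−2} for k ≥ 3). If (c_k)_{k≥0} are reals such that Σ_{k=0}^∞ c_{k+1} Z^k converges, then Σ_{k=0}^∞ c_k p_k converges and Σ_{k=0}^∞ c_k p_k = [I O]·(Σ_{k=0}^∞ c_{k+1} Z^k)·[A; A² − D] + c_0 I. -/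
/-!
Since `Z` is the block companion matrix of the recurrence, `Z ^ k * [A; A² − D]` stacks
`p (k + 1)` over `p (k + 2)`, so `p (k + 1) = [I O] * Z ^ k * [A; A² − D]`. Multiplying the series
for `F1` by `[I O]` on the left and `[A; A² − D]` on the right is continuous and additive, so it
yields `Σ c (k + 1) • p (k + 1)`; the term `k = 0` contributes `c 0 • I`.
-/

open Matrix

theorem Matrix.fromBlocks_companion_pow_mul_fromRows_s10 {m l R : Type*} [Fintype m] [DecidableEq m]
    [Semiring R] (A B : Matrix m m R) (q : ℕ → Matrix m l R)
    (hq : ∀ k, q (k + 2) = A * q (k + 1) + B * q k) (k : ℕ) :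
    (fromBlocks 0 1 B A : Matrix (m ⊕ m) (m ⊕ m) R) ^ k * fromRows (q 0) (q 1) =
      fromRows (q k) (q (k + 1)) := by
  induction k with
  | zero => rw [pow_zero, Matrix.one_mul]
  | succ k ih =>
    rw [pow_succ', Matrix.mul_assoc, ih, fromBlocks_mul_fromRows, hq, add_comm (B * q k)]
    simp

theorem HasSum.matrix_mul_mul {ι l m n o R : Type*} [Fintype m] [Fintype n]
    [NonUnitalNonAssocSemiring R] [TopologicalSpace R] [IsTopologicalSemiring R]
    {f : ι → Matrix m n R} {F : Matrix m n R} (h : HasSum f F)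
    (U : Matrix l m R) (V : Matrix n o R) :
    HasSum (fun i => U * f i * V) (U * F * V) :=
  let sandwich : Matrix m n R →+ Matrix l o R :=
    { toFun := fun X => U * X * V
      map_zero' := by rw [Matrix.mul_zero, Matrix.zero_mul]
      map_add' := fun X Y => by rw [Matrix.mul_add, Matrix.add_mul] }
  h.map sandwich (by show Continuous fun X : Matrix m n R => U * X * V; fun_prop)

theorem nbt_series_closed_form_general
    {n : ℕ}
    (A D : Matrix (Fin n) (Fin n) ℝ)
    (p : ℕ → Matrix (Fin n) (Fin n) ℝ)
    (hp0 : p 0 = 1) (hp1 : p 1 = A) (hp2 : p 2 = A ^ 2 - D)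
    (hprec : ∀ k, 3 ≤ k →
      p k = A * p (k - 1) + ((1 : Matrix (Fin n) (Fin n) ℝ) - D) * p (k - 2))
    (Z : Matrix (Fin n ⊕ Fin n) (Fin n ⊕ Fin n) ℝ)
    (hZ : Z = Matrix.fromBlocks 0 1 ((1 : Matrix (Fin n) (Fin n) ℝ) - D) A)
    (c : ℕ → ℝ)
    (F1 : Matrix (Fin n ⊕ Fin n) (Fin n ⊕ Fin n) ℝ)
    (hF1 : HasSum (fun k => c (k + 1) • Z ^ k) F1) :
    Summable (fun k => c k • p k) ∧
    (∑' k, c k • p k) =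
      Matrix.fromCols (1 : Matrix (Fin n) (Fin n) ℝ) (0 : Matrix (Fin n) (Fin n) ℝ) * F1 *
          Matrix.fromRows A (A ^ 2 - D)
        + c 0 • (1 : Matrix (Fin n) (Fin n) ℝ) := by
  set U : Matrix (Fin n) (Fin n ⊕ Fin n) ℝ := fromCols 1 0
  set V : Matrix (Fin n ⊕ Fin n) (Fin n) ℝ := fromRows A (A ^ 2 - D)
  have hrec : ∀ k, p (k + 3) = A * p (k + 2) + (1 - D) * p (k + 1) := fun k => by
    simpa using hprec (k + 3) (by omega)
  have hpZ : ∀ k, U * Z ^ k * V = p (k + 1) := fun k => by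
    have hshift := fromBlocks_companion_pow_mul_fromRows_s10 A (1 - D) (fun k => p (k + 1)) hrec k
    rw [zero_add, hp1, hp2, ← hZ] at hshift
    rw [Matrix.mul_assoc, hshift, fromCols_mul_fromRows, Matrix.one_mul, Matrix.zero_mul, add_zero]
  have htail : HasSum (fun k => c (k + 1) • p (k + 1)) (U * F1 * V) := by
    simpa only [Matrix.mul_smul, Matrix.smul_mul, hpZ] using hF1.matrix_mul_mul U V
  have hsum := (hasSum_nat_add_iff (f := fun k => c k • p k) 1).mp htail
  rw [Finset.sum_range_one, hp0] at hsum
  exact ⟨hsum.summable, hsum.tsum_eq⟩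

/-- Let `A = G.adjMatrix ℝ`, `D = diag(A𝟙)`, and for `μ = 1` let
`Z = [[O, I],[I − D, A]]`. Let `p` be the nonbacktracking walk count matrices
(`p 0 = I`, `p 1 = A`, `p 2 = A² − D`, `p k = A·p (k−1) + (I − D)·p (k−2)` for `k ≥ 3`).
If `Σ_k c (k+1) • Z^k` converges (with sum `F1`), then `Σ_k c k • p k` converges and
`Σ_k c k • p k = [I O]·F1·[A; A² − D] + c 0 • I`. -/
theorem nbt_series_closed_form
    {n : ℕ} (G : SimpleGraph (Fin n)) [DecidableRel G.Adj]
    (A D : Matrix (Fin n) (Fin n) ℝ)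
    (hA : A = G.adjMatrix ℝ)
    (hD : D = Matrix.diagonal (A *ᵥ fun _ => (1 : ℝ)))
    (p : ℕ → Matrix (Fin n) (Fin n) ℝ)
    (hp0 : p 0 = 1) (hp1 : p 1 = A) (hp2 : p 2 = A ^ 2 - D)
    (hprec : ∀ k, 3 ≤ k →
      p k = A * p (k - 1) + ((1 : Matrix (Fin n) (Fin n) ℝ) - D) * p (k - 2))
    (Z : Matrix (Fin n ⊕ Fin n) (Fin n ⊕ Fin n) ℝ)
    (hZ : Z = Matrix.fromBlocks 0 1 ((1 : Matrix (Fin n) (Fin n) ℝ) - D) A)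
    (c : ℕ → ℝ)
    (F1 : Matrix (Fin n ⊕ Fin n) (Fin n ⊕ Fin n) ℝ)
    (hF1 : HasSum (fun k => c (k + 1) • Z ^ k) F1) :
    Summable (fun k => c k • p k) ∧
    (∑' k, c k • p k) =
      Matrix.fromCols (1 : Matrix (Fin n) (Fin n) ℝ) (0 : Matrix (Fin n) (Fin n) ℝ) * F1 *
          Matrix.fromRows A (A ^ 2 - D)
        + c 0 • (1 : Matrix (Fin n) (Fin n) ℝ) :=
  nbt_series_closed_form_general A D p hp0 hp1 hp2 hprec Z hZ c F1 hF1
end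

section
/- Let A ∈ ℝ^{n×n} be the adjacency matrix of a finite simple graph, D = diag(A𝟙), and let p_k be the nonbacktracking walk count matrices (p_0 = I, p_1 = A, p_2 = A² − D, p_k = A·p_{k−1} + (I − D)·p_{k−2} for k ≥ 3). Let α > 0 be such that the series Σ_{k=0}^∞ α^k p_k converges in ℝ^{n×n}. Then (Σ_{k=0}^∞ α^k p_k)·(I − αA − α²(I − D)) = (1 − α²)·I; in particular the deformed graph Laplacian 𝒜(α) = I − αA − α²(I − D) is invertible with inverse (1 − α²)^{-1} Σ_{k=0}^∞ α^k p_k (for α ≠ 1). -/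
open Matrix

/-- Let `A = G.adjMatrix ℝ`, `D = diag(A𝟙)`, and `p` the nonbacktracking
walk count matrices (`p 0 = I`, `p 1 = A`, `p 2 = A² − D`,
`p k = A·p (k−1) + (I − D)·p (k−2)` for `k ≥ 3`). Let `α > 0` be such that `Σ_k α^k • p k`
converges, with sum `S`. Then `S·(I − αA − α²(I − D)) = (1 − α²)·I`; in particular, for
`α ≠ 1` the deformed graph Laplacian `𝒜(α) = I − αA − α²(I − D)` is invertible with
inverse `(1 − α²)⁻¹ • S`. -/
theorem deformed_laplacian_resolvent
    {n : ℕ} (G : SimpleGraph (Fin n)) [DecidableRel G.Adj]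
    (A D : Matrix (Fin n) (Fin n) ℝ)
    (hA : A = G.adjMatrix ℝ)
    (hD : D = Matrix.diagonal (A *ᵥ fun _ => (1 : ℝ)))
    (p : ℕ → Matrix (Fin n) (Fin n) ℝ)
    (hp0 : p 0 = 1) (hp1 : p 1 = A) (hp2 : p 2 = A ^ 2 - D)
    (hprec : ∀ k, 3 ≤ k →
      p k = A * p (k - 1) + ((1 : Matrix (Fin n) (Fin n) ℝ) - D) * p (k - 2))
    (α : ℝ) (hα : 0 < α)
    (S : Matrix (Fin n) (Fin n) ℝ)
    (hS : HasSum (fun k => α ^ k • p k) S) :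
    S * ((1 : Matrix (Fin n) (Fin n) ℝ) - α • A
          - α ^ 2 • ((1 : Matrix (Fin n) (Fin n) ℝ) - D))
      = (1 - α ^ 2) • (1 : Matrix (Fin n) (Fin n) ℝ) ∧
    (α ≠ 1 →
      ((1 : Matrix (Fin n) (Fin n) ℝ) - α • A
          - α ^ 2 • ((1 : Matrix (Fin n) (Fin n) ℝ) - D)) * ((1 - α ^ 2)⁻¹ • S) = 1 ∧
      ((1 - α ^ 2)⁻¹ • S) * ((1 : Matrix (Fin n) (Fin n) ℝ) - α • A
          - α ^ 2 • ((1 : Matrix (Fin n) (Fin n) ℝ) - D)) = 1) := by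
  -- left recurrence in shifted form
  have hr3 : ∀ k, p (k + 3) = A * p (k + 2)
      + ((1 : Matrix (Fin n) (Fin n) ℝ) - D) * p (k + 1) := by
    intro k
    have h := hprec (k + 3) (by omega)
    rw [show k + 3 - 1 = k + 2 from by omega, show k + 3 - 2 = k + 1 from by omega] at h
    exact h
  -- right-sided recurrence, by two-step induction
  have hR : ∀ k, p (k + 3) = p (k + 2) * A
      + p (k + 1) * ((1 : Matrix (Fin n) (Fin n) ℝ) - D) := by
    have key : ∀ k, (p (k + 3) = p (k + 2) * A
        + p (k + 1) * ((1 : Matrix (Fin n) (Fin n) ℝ) - D)) ∧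
        (p (k + 4) = p (k + 3) * A
        + p (k + 2) * ((1 : Matrix (Fin n) (Fin n) ℝ) - D)) := by
      intro k
      induction k with
      | zero =>
        have h3 : p 3 = A * p 2 + ((1 : Matrix (Fin n) (Fin n) ℝ) - D) * p 1 := hr3 0
        have h4 : p 4 = A * p 3 + ((1 : Matrix (Fin n) (Fin n) ℝ) - D) * p 2 := hr3 1
        constructor
        · rw [h3, hp2, hp1]; noncomm_ring
        · rw [h4, h3, hp2, hp1]; noncomm_ring
      | succ m ih =>
        refine ⟨ih.2, ?_⟩
        rw [show m + 1 + 4 = m + 2 + 3 from by omega,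
            show m + 1 + 3 = m + 4 from by omega,
            show m + 1 + 2 = m + 3 from by omega]
        calc p (m + 2 + 3)
            = A * p (m + 2 + 2) + ((1 : Matrix (Fin n) (Fin n) ℝ) - D) * p (m + 2 + 1) :=
              hr3 (m + 2)
          _ = A * (p (m + 3) * A + p (m + 2) * ((1 : Matrix (Fin n) (Fin n) ℝ) - D))
              + ((1 : Matrix (Fin n) (Fin n) ℝ) - D)
                * (p (m + 2) * A + p (m + 1) * ((1 : Matrix (Fin n) (Fin n) ℝ) - D)) := by
              rw [show m + 2 + 2 = m + 4 from by omega, show m + 2 + 1 = m + 3 from by omega,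
                ih.2, ih.1]
          _ = (A * p (m + 3) + ((1 : Matrix (Fin n) (Fin n) ℝ) - D) * p (m + 2)) * A
              + (A * p (m + 2) + ((1 : Matrix (Fin n) (Fin n) ℝ) - D) * p (m + 1))
                * ((1 : Matrix (Fin n) (Fin n) ℝ) - D) := by noncomm_ring
          _ = p (m + 4) * A + p (m + 3) * ((1 : Matrix (Fin n) (Fin n) ℝ) - D) := by
              rw [← hr3 (m + 1), ← hr3 m]
    exact fun k => (key k).1
  -- shifted sums
  set f : ℕ → Matrix (Fin n) (Fin n) ℝ := fun k => α ^ k • p k with hf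
  have t3 : HasSum (fun k => f (k + 3)) (S - ∑ i ∈ Finset.range 3, f i) := by
    rw [hasSum_nat_add_iff]; simpa using hS
  have t2 : HasSum (fun k => f (k + 2)) (S - ∑ i ∈ Finset.range 2, f i) := by
    rw [hasSum_nat_add_iff]; simpa using hS
  have t1 : HasSum (fun k => f (k + 1)) (S - ∑ i ∈ Finset.range 1, f i) := by
    rw [hasSum_nat_add_iff]; simpa using hS
  have tA : HasSum (fun k => α • (f (k + 2) * A))
      (α • ((S - ∑ i ∈ Finset.range 2, f i) * A)) := (t2.mul_right A).const_smul α
  have tB : HasSum (fun k => α ^ 2 • (f (k + 1) * ((1 : Matrix (Fin n) (Fin n) ℝ) - D)))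
      (α ^ 2 • ((S - ∑ i ∈ Finset.range 1, f i) * ((1 : Matrix (Fin n) (Fin n) ℝ) - D))) :=
    (t1.mul_right _).const_smul (α ^ 2)
  have heq : (fun k => f (k + 3)) = fun k =>
      α • (f (k + 2) * A)
      + α ^ 2 • (f (k + 1) * ((1 : Matrix (Fin n) (Fin n) ℝ) - D)) := by
    funext k
    simp only [hf]
    rw [hR k]
    simp only [smul_mul_assoc, smul_smul, smul_add]
    rw [show α * α ^ (k + 2) = α ^ (k + 3) from by ring,
        show α ^ 2 * α ^ (k + 1) = α ^ (k + 3) from by ring]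
  have E := HasSum.unique (heq ▸ t3) (tA.add tB)
  -- expand the partial sums
  have s3 : ∑ i ∈ Finset.range 3, f i = 1 + α • A + α ^ 2 • (A ^ 2 - D) := by
    simp [hf, Finset.sum_range_succ, hp0, hp1, hp2]
  have s2 : ∑ i ∈ Finset.range 2, f i = 1 + α • A := by
    simp [hf, Finset.sum_range_succ, hp0, hp1]
  have s1 : ∑ i ∈ Finset.range 1, f i = 1 := by
    simp [hf, hp0]
  rw [s3, s2, s1] at E
  -- the key identity
  have key : S * ((1 : Matrix (Fin n) (Fin n) ℝ) - α • A
      - α ^ 2 • ((1 : Matrix (Fin n) (Fin n) ℝ) - D))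
      = (1 - α ^ 2) • (1 : Matrix (Fin n) (Fin n) ℝ) := by
    simp only [mul_sub, sub_mul, add_mul, mul_add, mul_one, one_mul, mul_smul_comm,
      smul_mul_assoc, smul_sub, smul_add, smul_smul, pow_two] at E ⊢
    linear_combination (norm := module) E
  refine ⟨key, fun hα1 => ?_⟩
  have hne : (1 - α ^ 2) ≠ 0 := by
    intro h
    have h2 : (α - 1) * (α + 1) = 0 := by linear_combination -h
    rcases mul_eq_zero.1 h2 with h3 | h3
    · exact hα1 (by linarith)
    · linarith
  have left : ((1 - α ^ 2)⁻¹ • S) * ((1 : Matrix (Fin n) (Fin n) ℝ) - α • A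
      - α ^ 2 • ((1 : Matrix (Fin n) (Fin n) ℝ) - D)) = 1 := by
    rw [smul_mul_assoc, key, smul_smul, inv_mul_cancel₀ hne, one_smul]
  exact ⟨mul_eq_one_comm.mpr left, left⟩
end
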